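/- Let S be an n×n symmetric matrix whose entries are polynomials in ℝ[x₁,…,x_m]. Then S is a sum-of-squares matrix polynomial (i.e., there exists a matrix L with polynomial entries such that S = L Lᵀ) if and only if the polynomial yᵀ S(x) y ∈ ℝ[x₁,…,x_m, y₁,…,y_n] is a sum of squares of polynomials. -/

import Mathlib

/-!
Identify `ℝ[x, y]` with `A[y]`, `A = ℝ[x]`, so that `yᵀ S y` becomes a quadratic form over `A`.
If it equals `∑ qₖ²`, the terms `qₖ(x, 0)` satisfy `∑ qₖ(x, 0)² = 0`, hence vanish because `A`
is formally real; comparing components of degree two then gives `yᵀ S y = ∑ ℓₖ²` with `ℓₖ` the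
linear part of `qₖ`. Writing `ℓₖ = ∑ᵢ Lᵢₖ yᵢ` turns this into `yᵀ S y = yᵀ (L Lᵀ) y`, and a
symmetric matrix is recovered from its quadratic form by differentiating twice.
-/

open MvPolynomial

theorem IsSumSq.map {R S F : Type*} [NonUnitalNonAssocSemiring R] [NonUnitalNonAssocSemiring S]
    [FunLike F R S] [NonUnitalRingHomClass F R S] (f : F) {s : R} (hs : IsSumSq s) :
    IsSumSq (f s) := by
  induction hs with
  | zero => simp [IsSumSq.zero]
  | sq_add a _ ih => simpa using ih.sq_add (f a)

theorem IsFormallyReal.eq_zero_of_sum_sq_eq_zero {R ι : Type*} [CommRing R] [IsFormallyReal R]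
    {s : Finset ι} {x : ι → R} (h : ∑ i ∈ s, x i ^ 2 = 0) {i : ι} (hi : i ∈ s) : x i = 0 := by
  classical
  rw [← Finset.add_sum_erase s _ hi] at h
  have hsq : x i ^ 2 = 0 := eq_zero_of_add_right (by simp [sq]) (IsSumSq.sum_sq _ _) h
  exact IsReduced.eq_zero _ ⟨2, hsq⟩

theorem RingEquiv.exists_eq_sum_sq_iff {A B : Type*} [Semiring A] [Semiring B] (e : A ≃+* B)
    (a : A) :
    (∃ (N : ℕ) (q : Fin N → A), a = ∑ i, q i ^ 2) ↔
      ∃ (N : ℕ) (q : Fin N → B), e a = ∑ i, q i ^ 2 := by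
  constructor
  · rintro ⟨N, q, rfl⟩
    exact ⟨N, fun i => e (q i), by simp only [map_sum, map_pow]⟩
  · rintro ⟨N, q, h⟩
    refine ⟨N, fun i => e.symm (q i), e.injective ?_⟩
    simp only [h, map_sum, map_pow, apply_symm_apply]

namespace MvPolynomial

variable {R σ : Type*}

instance [CommRing R] [LinearOrder R] [IsStrictOrderedRing R] :
    IsFormallyReal (MvPolynomial σ R) :=
  IsFormallyReal.of_eq_zero_of_eq_zero_of_mul_self_add fun {s a} hs h => by
    refine MvPolynomial.funext fun x => ?_
    have hs_nonneg : 0 ≤ eval x s := (hs.map (eval x)).nonneg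
    have h_eval := congrArg (eval x) h
    simp only [map_add, map_mul, map_zero] at h_eval
    simpa using mul_self_eq_zero.mp (le_antisymm (by linarith) (mul_self_nonneg _))

theorem homogeneousComponent_two_sq [CommSemiring R] {p : MvPolynomial σ R}
    (hp : coeff 0 p = 0) :
    homogeneousComponent 2 (p ^ 2) = homogeneousComponent 1 p ^ 2 := by
  classical
  ext d
  rw [coeff_homogeneousComponent]
  split_ifs with hd
  · rw [sq, sq, coeff_mul, coeff_mul]
    refine Finset.sum_congr rfl fun ⟨a, b⟩ hab => ?_
    have hdeg : a.degree + b.degree = 2 := by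
      rw [← map_add, Finset.HasAntidiagonal.mem_antidiagonal.mp hab, hd]
    simp only [coeff_homogeneousComponent]
    rcases (by omega : a.degree = 0 ∨ (a.degree = 1 ∧ b.degree = 1) ∨ b.degree = 0)
      with h | ⟨ha, hb⟩ | h
    · obtain rfl := (Finsupp.degree_eq_zero_iff a).mp h
      simp [hp]
    · simp [ha, hb]
    · obtain rfl := (Finsupp.degree_eq_zero_iff b).mp h
      simp [hp]
  · exact (((homogeneousComponent_isHomogeneous 1 p).pow 2).coeff_eq_zero hd).symm

theorem IsHomogeneous.eq_sum_homogeneousComponent_one_sq [CommRing R] [IsFormallyReal R]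
    {Q : MvPolynomial σ R} (hQ : Q.IsHomogeneous 2) {ι : Type*} {s : Finset ι}
    {q : ι → MvPolynomial σ R} (h : Q = ∑ k ∈ s, q k ^ 2) :
    Q = ∑ k ∈ s, homogeneousComponent 1 (q k) ^ 2 := by
  have hconst : ∀ k ∈ s, constantCoeff (q k) = 0 := by
    have hsum : ∑ k ∈ s, constantCoeff (q k) ^ 2 = 0 := by
      simp only [← map_pow, ← map_sum, ← h]
      exact hQ.coeff_eq_zero (by simp)
    exact fun k hk => IsFormallyReal.eq_zero_of_sum_sq_eq_zero hsum hk
  calc Q = homogeneousComponent 2 Q := (homogeneousComponent_eq_self hQ).symm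
    _ = ∑ k ∈ s, homogeneousComponent 2 (q k ^ 2) := by rw [h, map_sum]
    _ = ∑ k ∈ s, homogeneousComponent 1 (q k) ^ 2 :=
      Finset.sum_congr rfl fun k hk => homogeneousComponent_two_sq (hconst k hk)

theorem exists_toMvPolynomial_eq_of_isHomogeneous_one [CommSemiring R] [Fintype σ] {ι : Type*}
    {p : ι → MvPolynomial σ R} (hp : ∀ k, (p k).IsHomogeneous 1) :
    ∃ M : Matrix ι σ R, ∀ k, M.toMvPolynomial k = p k := by
  have hspan (k : ι) : p k ∈ Submodule.span R (Set.range X) := by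
    rw [← homogeneousSubmodule_one_eq_span_X]
    exact hp k
  choose M hM using fun k => (Submodule.mem_span_range_iff_exists_fun R).mp (hspan k)
  refine ⟨Matrix.of M, fun k => ?_⟩
  simp only [Matrix.toMvPolynomial, Matrix.of_apply, ← hM k, smul_eq_C_mul, C_mul_X_eq_monomial]

variable (R σ) (τ : Type*)

noncomputable def sumAlgEquivRight [CommSemiring R] :
    MvPolynomial (σ ⊕ τ) R ≃ₐ[R] MvPolynomial τ (MvPolynomial σ R) :=
  (renameEquiv R (Equiv.sumComm σ τ)).trans (sumAlgEquiv R τ σ)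

variable {R σ τ} [CommSemiring R]

@[simp]
theorem sumAlgEquivRight_X_inr (i : τ) : sumAlgEquivRight R σ τ (X (Sum.inr i)) = X i := by
  simp [sumAlgEquivRight, sumAlgEquiv_X_inl]

@[simp]
theorem sumAlgEquivRight_rename_inl (p : MvPolynomial σ R) :
    sumAlgEquivRight R σ τ (rename Sum.inl p) = C p := by
  have h := AlgHom.congr_fun (sumAlgEquiv_comp_rename_inr R τ σ) p
  simp only [AlgHom.comp_apply, IsScalarTower.coe_toAlgHom', algebraMap_eq] at h
  simp only [sumAlgEquivRight, AlgEquiv.trans_apply, renameEquiv_apply, rename_rename]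
  exact h

end MvPolynomial

namespace Matrix

variable {n R : Type*} [Fintype n]

section CommSemiring

variable [CommSemiring R]

noncomputable def toQuadraticMvPolynomial (S : Matrix n n R) : MvPolynomial n R :=
  ∑ i, ∑ j, X i * C (S i j) * X j

theorem toMvPolynomial_eq_sum_C_mul_X {m : Type*} (M : Matrix m n R) (i : m) :
    M.toMvPolynomial i = ∑ j, C (M i j) * X j := by
  simp only [toMvPolynomial, C_mul_X_eq_monomial]

theorem sum_toMvPolynomial_sq {k : Type*} [Fintype k] (M : Matrix k n R) :
    ∑ a, M.toMvPolynomial a ^ 2 = (Mᵀ * M).toQuadraticMvPolynomial := by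
  simp only [toMvPolynomial_eq_sum_C_mul_X, toQuadraticMvPolynomial, sq, mul_apply,
    transpose_apply, map_sum, map_mul, Finset.mul_sum, Finset.sum_mul]
  rw [Finset.sum_comm]
  refine Finset.sum_congr rfl fun i _ => ?_
  rw [Finset.sum_comm]
  exact Finset.sum_congr rfl fun j _ => Finset.sum_congr rfl fun a _ => by ring

theorem toQuadraticMvPolynomial_isHomogeneous (S : Matrix n n R) :
    S.toQuadraticMvPolynomial.IsHomogeneous 2 :=
  IsHomogeneous.sum _ _ _ fun i _ => IsHomogeneous.sum _ _ _ fun j _ =>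
    ((isHomogeneous_X R i).mul (isHomogeneous_C _ _)).mul (isHomogeneous_X R j)

theorem pderiv_pderiv_toQuadraticMvPolynomial [DecidableEq n] (S : Matrix n n R) (i j : n) :
    pderiv i (pderiv j S.toQuadraticMvPolynomial) = C (S i j + S j i) := by
  simp [toQuadraticMvPolynomial, pderiv_X, Pi.single_apply, Finset.sum_add_distrib]

theorem eq_of_toQuadraticMvPolynomial_eq [IsAddTorsionFree R] {S T : Matrix n n R}
    (hS : S.IsSymm) (hT : T.IsSymm)
    (h : S.toQuadraticMvPolynomial = T.toQuadraticMvPolynomial) : S = T := by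
  classical
  ext i j
  have h₂ := congrArg (fun p => pderiv i (pderiv j p)) h
  simp only [pderiv_pderiv_toQuadraticMvPolynomial, C_inj, hS.apply, hT.apply] at h₂
  exact nsmul_right_injective two_ne_zero (by simpa only [two_nsmul] using h₂)

end CommSemiring

theorem exists_eq_mul_transpose_iff_exists_sum_sq [CommRing R] [IsFormallyReal R]
    [IsAddTorsionFree R] {S : Matrix n n R} (hS : S.IsSymm) :
    (∃ (k : ℕ) (L : Matrix n (Fin k) R), S = L * Lᵀ) ↔
      ∃ (N : ℕ) (q : Fin N → MvPolynomial n R), S.toQuadraticMvPolynomial = ∑ i, q i ^ 2 := by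
  constructor
  · rintro ⟨k, L, rfl⟩
    exact ⟨k, Lᵀ.toMvPolynomial, by rw [sum_toMvPolynomial_sq, transpose_transpose]⟩
  · rintro ⟨N, q, hq⟩
    obtain ⟨M, hM⟩ := exists_toMvPolynomial_eq_of_isHomogeneous_one
      fun k => homogeneousComponent_isHomogeneous 1 (q k)
    refine ⟨N, Mᵀ, eq_of_toQuadraticMvPolynomial_eq hS ?_ ?_⟩
    · rw [IsSymm, transpose_mul, transpose_transpose]
    · rw [transpose_transpose, ← sum_toMvPolynomial_sq, funext hM]
      exact S.toQuadraticMvPolynomial_isHomogeneous.eq_sum_homogeneousComponent_one_sq hq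

end Matrix

/-- A symmetric matrix `S` of polynomials is a sum-of-squares matrix polynomial
(`S = L Lᵀ` for some polynomial matrix `L`) if and only if the polynomial `yᵀ S(x) y`
in the variables `x₁,…,x_m, y₁,…,y_n` is a sum of squares. -/
theorem sos_matrix_iff_sos_polynomial {m n : ℕ}
    (S : Matrix (Fin n) (Fin n) (MvPolynomial (Fin m) ℝ)) (hS : S.IsSymm) :
    (∃ (k : ℕ) (L : Matrix (Fin n) (Fin k) (MvPolynomial (Fin m) ℝ)), S = L * L.transpose) ↔
    (∃ (N : ℕ) (q : Fin N → MvPolynomial (Fin m ⊕ Fin n) ℝ),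
      (∑ i : Fin n, ∑ j : Fin n,
        X (Sum.inr i) * rename Sum.inl (S i j) * X (Sum.inr j)) = ∑ i, q i ^ 2) := by
  have h_transport : sumAlgEquivRight ℝ (Fin m) (Fin n)
      (∑ i : Fin n, ∑ j : Fin n, X (Sum.inr i) * rename Sum.inl (S i j) * X (Sum.inr j)) =
      S.toQuadraticMvPolynomial := by
    simp [Matrix.toQuadraticMvPolynomial]
  rw [Matrix.exists_eq_mul_transpose_iff_exists_sum_sq hS,
    (sumAlgEquivRight ℝ (Fin m) (Fin n)).toRingEquiv.exists_eq_sum_sq_iff,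
    AlgEquiv.coe_ringEquiv, h_transport]
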